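/- Let $n\geq 3$ and let $L_S$ be the $n\times n$ matrix with diagonal entries 4, super/sub-diagonal entries $-1$, corner entries $(L_S)_{1,n}=(L_S)_{n,1}=1$. Then the sum of all $(n-1)\times(n-1)$ principal minors of $L_S$ equals $\frac{n}{2\sqrt{3}}\big((2+\sqrt{3})^{n}-(2-\sqrt{3})^{n}\big)$. -/
import Mathlib


/-- The matrix `L_S`: diagonal `4`, subdiagonal and superdiagonal `-1`,
corner entries `+1` at positions `(1,n)` and `(n,1)`. -/
noncomputable def LS (n : ℕ) : Matrix (Fin n) (Fin n) ℝ :=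
  Matrix.of fun i j =>
    if i = j then 4
    else if i.val + 1 = j.val ∨ j.val + 1 = i.val then -1
    else if (i.val = 0 ∧ j.val = n - 1) ∨ (i.val = n - 1 ∧ j.val = 0) then 1
    else 0

noncomputable def Tm (m : ℕ) : Matrix (Fin m) (Fin m) ℝ :=
  Matrix.of fun i j =>
    if i = j then 4
    else if i.val + 1 = j.val ∨ j.val + 1 = i.val then -1
    else 0


lemma Tm_succ_succ (k : ℕ) (a b : Fin k) :
    Tm (k+1) a.succ b.succ = Tm k a b := by
  simp only [Tm, Matrix.of_apply, Fin.succ_inj, Fin.val_succ]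
  by_cases h : a = b
  · simp [h]
  · rw [if_neg h, if_neg h]
    congr 1
    simp only [eq_iff_iff]; omega

lemma Tm_rec (k : ℕ) : (Tm (k+2)).det = 4 * (Tm (k+1)).det - (Tm k).det := by
  rw [Matrix.det_succ_row_zero, Fin.sum_univ_succ, Fin.sum_univ_succ]
  have h0 : Tm (k+2) 0 0 = 4 := by simp [Tm]
  have h1 : Tm (k+2) 0 (Fin.succ 0) = -1 := by simp [Tm, Fin.ext_iff]
  have hrest : ∀ j : Fin k, Tm (k+2) 0 (Fin.succ (Fin.succ j)) = 0 := by
    intro j; simp [Tm, Fin.ext_iff]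
  rw [h0, h1, Finset.sum_eq_zero (fun j _ => by rw [hrest j]; ring)]
  have hm1 : ((Tm (k+2)).submatrix Fin.succ ((0 : Fin (k+2)).succAbove)).det = (Tm (k+1)).det := by
    congr 1
    ext a b
    rw [Fin.succAbove_zero, Matrix.submatrix_apply, Tm_succ_succ]
  have hm2 : ((Tm (k+2)).submatrix Fin.succ ((Fin.succ 0 : Fin (k+2)).succAbove)).det = -(Tm k).det := by
    rw [Matrix.det_succ_column_zero, Fin.sum_univ_succ]
    have h00 : ((Tm (k+2)).submatrix Fin.succ ((Fin.succ 0 : Fin (k+2)).succAbove)) 0 0 = -1 := by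
      simp [Tm, Fin.succAbove, Fin.ext_iff]
    have hr : ∀ i : Fin k, ((Tm (k+2)).submatrix Fin.succ ((Fin.succ 0 : Fin (k+2)).succAbove)) i.succ 0 = 0 := by
      intro i; simp [Tm, Fin.succAbove, Fin.ext_iff]
    rw [h00, Finset.sum_eq_zero (fun i _ => by rw [hr i]; ring)]
    have hsub : ((((Tm (k+2)).submatrix Fin.succ ((Fin.succ 0 : Fin (k+2)).succAbove))).submatrix (Fin.succAbove 0) Fin.succ) = Tm k := by
      ext a b
      simp only [Matrix.submatrix_apply, Fin.succAbove_zero, Fin.succ_succAbove_succ]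
      rw [Tm_succ_succ, Tm_succ_succ]
    rw [hsub]
    simp
  rw [hm1, hm2]
  simp
  ring

lemma Tm_closed : ∀ m : ℕ, (Tm m).det =
    ((2 + Real.sqrt 3) ^ (m+1) - (2 - Real.sqrt 3) ^ (m+1)) / (2 * Real.sqrt 3) := by
  have hs : Real.sqrt 3 ^ 2 = 3 := Real.sq_sqrt (by norm_num)
  have hsp : (0:ℝ) < Real.sqrt 3 := Real.sqrt_pos.mpr (by norm_num)
  have hne : (2 * Real.sqrt 3) ≠ 0 := by positivity
  have key : ∀ m, (Tm m).det = ((2 + Real.sqrt 3) ^ (m+1) - (2 - Real.sqrt 3) ^ (m+1)) / (2 * Real.sqrt 3) ∧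
      (Tm (m+1)).det = ((2 + Real.sqrt 3) ^ (m+2) - (2 - Real.sqrt 3) ^ (m+2)) / (2 * Real.sqrt 3) := by
    intro m
    induction m with
    | zero =>
      constructor
      · simp [Matrix.det_fin_zero]
        field_simp
        ring
      · simp [Matrix.det_fin_one, Tm]
        field_simp
        nlinarith [hs]
    | succ k ih =>
      refine ⟨ih.2, ?_⟩
      have hα : (2 + Real.sqrt 3)^2 = 4*(2 + Real.sqrt 3) - 1 := by nlinarith [hs]
      have hβ : (2 - Real.sqrt 3)^2 = 4*(2 - Real.sqrt 3) - 1 := by nlinarith [hs]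
      have e1 : ∀ x:ℝ, x^(k+2) = x^(k+1) * x := fun x => by ring
      have e2 : ∀ x:ℝ, x^(k+3) = x^(k+1) * x^2 := fun x => by ring
      have hnum : 4 * ((2 + Real.sqrt 3)^(k+2) - (2 - Real.sqrt 3)^(k+2))
          - ((2 + Real.sqrt 3)^(k+1) - (2 - Real.sqrt 3)^(k+1))
          = (2 + Real.sqrt 3)^(k+3) - (2 - Real.sqrt 3)^(k+3) := by
        rw [e1, e1, e2, e2]
        linear_combination (2 - Real.sqrt 3)^(k+1) * hβ - (2 + Real.sqrt 3)^(k+1) * hα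
      rw [Tm_rec, ih.1, ih.2]
      show _ = ((2 + Real.sqrt 3) ^ (k + 3) - (2 - Real.sqrt 3) ^ (k + 3)) / (2 * Real.sqrt 3)
      rw [← hnum]
      field_simp
  exact fun m => (key m).1

lemma minor_eq (m : ℕ) (hm : 2 ≤ m) (i : Fin (m+1)) :
    ((LS (m+1)).submatrix i.succAbove i.succAbove).det = (Tm m).det := by
  set φ : Fin m → Fin (m+1) := fun k => i + 1 + k.castSucc with hφdef
  have hφ : Function.Injective φ := by
    intro k l h
    have := add_left_cancel h
    exact Fin.castSucc_injective _ this
  have hval : ∀ k : Fin m, (φ k : ℕ) = (i.val + 1 + k.val) % (m+1) := by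
    intro k
    show ((i + 1 + k.castSucc : Fin (m+1)) : ℕ) = _
    rw [Fin.val_add, Fin.val_add, Fin.coe_castSucc, Fin.val_one', Nat.mod_add_mod]
    rw [Nat.mod_eq_of_lt (show 1 < m + 1 by omega)]
  have hvif : ∀ k : Fin m, (φ k : ℕ) =
      if i.val + 1 + k.val < m+1 then i.val + 1 + k.val else i.val + 1 + k.val - (m+1) := by
    intro k
    rw [hval k]
    have hk := k.isLt
    have hi := i.isLt
    split_ifs with h
    · exact Nat.mod_eq_of_lt h
    · rw [Nat.mod_eq_sub_mod (by omega)]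
      exact Nat.mod_eq_of_lt (by omega)
  have hrange : Set.range φ = Set.range i.succAbove := by
    rw [Fin.range_succAbove]
    ext j
    simp only [Set.mem_range, Set.mem_compl_iff, Set.mem_singleton_iff]
    constructor
    · rintro ⟨k, rfl⟩ h
      have h1 := hvif k
      have h2 : (φ k : ℕ) = (i : ℕ) := by rw [h]
      have hk := k.isLt
      have hi := i.isLt
      split_ifs at h1 <;> omega
    · intro hj
      have hi := i.isLt
      have hjlt := j.isLt
      have hne : (j:ℕ) ≠ (i:ℕ) := fun h => hj (Fin.ext h)
      refine ⟨⟨if (i:ℕ) < (j:ℕ) then (j:ℕ) - (i:ℕ) - 1 else (j:ℕ) + m - (i:ℕ), by split_ifs <;> omega⟩, ?_⟩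
      apply Fin.ext
      rw [hvif]
      simp only
      split_ifs <;> omega
  set ε : Fin m → ℝ := fun k => if (i:ℕ) + 1 + (k:ℕ) < m+1 then 1 else -1 with hεdef
  have hε1 : ∀ k, ε k * ε k = 1 := by
    intro k; simp only [hεdef]; split_ifs <;> norm_num
  set e : Fin m ≃ Fin m :=
    ((Equiv.ofInjective φ hφ).trans (Equiv.setCongr hrange)).trans
      (Equiv.ofInjective _ (Fin.succAbove_right_injective (p := i))).symm with hedef
  have he : ∀ k, i.succAbove (e k) = φ k := by
    intro k
    simp only [hedef, Equiv.trans_apply]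
    exact Equiv.apply_ofInjective_symm (Fin.succAbove_right_injective (p := i)) _
  have hsub : ((LS (m+1)).submatrix i.succAbove i.succAbove).submatrix e e
      = (LS (m+1)).submatrix φ φ := by
    ext a b
    simp only [Matrix.submatrix_apply, he]
  have entry : ∀ a b : Fin m, Tm m a b = ε a * ε b * ((LS (m+1)).submatrix φ φ) a b := by
    intro a b
    have hxa := hvif a
    have hxb := hvif b
    have hi := i.isLt
    have ha' := a.isLt
    have hb' := b.isLt
    have hab : (φ a = φ b) ↔ ((φ a : ℕ) = (φ b : ℕ)) := Fin.ext_iff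
    simp only [Matrix.submatrix_apply, Tm, LS, Matrix.of_apply, hεdef, Fin.ext_iff, hxa, hxb]
    split_ifs
    all_goals try norm_num
    all_goals try omega
    all_goals (exfalso; omega)
  calc ((LS (m+1)).submatrix i.succAbove i.succAbove).det
      = (((LS (m+1)).submatrix i.succAbove i.succAbove).submatrix e e).det :=
        (Matrix.det_submatrix_equiv_self e _).symm
    _ = ((LS (m+1)).submatrix φ φ).det := by rw [hsub]
    _ = (Tm m).det := by
        have hT : Tm m = Matrix.of fun a b => ε a * (Matrix.of (fun a b => ε b * ((LS (m+1)).submatrix φ φ) a b)) a b := by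
          ext a b
          simp only [Matrix.of_apply]
          rw [entry a b]
          ring
        rw [hT, Matrix.det_mul_column, Matrix.det_mul_row]
        rw [← mul_assoc, ← Finset.prod_mul_distrib]
        rw [Finset.prod_congr rfl (fun k _ => hε1 k), Finset.prod_const_one, one_mul]
/-- The sum of all `(n-1) × (n-1)` principal minors of `L_S` (here `n = m + 1`). -/
theorem stmt3 (m : ℕ) (hn : 3 ≤ m + 1) :
    ∑ i : Fin (m + 1),
        ((LS (m + 1)).submatrix i.succAbove i.succAbove).det =
      (m + 1) / (2 * Real.sqrt 3) *
        ((2 + Real.sqrt 3) ^ (m + 1) - (2 - Real.sqrt 3) ^ (m + 1)) := by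
  have hm : 2 ≤ m := by omega
  rw [Finset.sum_congr rfl (fun i _ => minor_eq m hm i), Finset.sum_const, Finset.card_univ,
    Fintype.card_fin, Tm_closed, nsmul_eq_mul]
  push_cast
  ring
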